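/- (Decomposition Lemma) If c is the center of the minimum enclosing power ball of weighted points {(p_i, w(p_i))} in a real Hilbert space, with squared radius r² = max_i (‖c − p_i‖² − w(p_i)), and I is the set of indices attaining this maximum, then there exist nonnegative reals (λ_i)_{i∈I} with ∑_{i∈I} λ_i = 1, c = ∑_{i∈I} λ_i p_i, and r² = (1/2) ∑_{i,j∈I} λ_i λ_j (‖p_i − p_j‖² − w(p_i) − w(p_j)). -/

import Mathlib

/-!
If the center `c` were outside the convex hull of the active points, the direction `d` from the
nearest point of that hull to `c` would make an acute angle with every `c - pᵢ`, `i` active. Moving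
`c` slightly against `d` then strictly lowers every active power distance while, by continuity, the
inactive ones stay below `r²`, contradicting minimality. So `c = ∑ λᵢ pᵢ` with weights on the active
set, and expanding `‖pᵢ - pⱼ‖² = ‖c - pᵢ‖² + ‖c - pⱼ‖² - 2⟪c - pᵢ, c - pⱼ⟫` the cross terms sum to
`‖∑ λᵢ (c - pᵢ)‖² = 0`, leaving `2 ∑ λᵢ (‖c - pᵢ‖² - w(pᵢ)) = 2 r²`.
-/

open Finset Filter Topology
open scoped InnerProductSpace

theorem exists_weights_of_mem_convexHull_image {R E ι : Type*} [Field R] [LinearOrder R]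
    [IsStrictOrderedRing R] [AddCommGroup E] [Module R E] [Fintype ι] {v : ι → E} {t : Set ι}
    {x : E} (hx : x ∈ convexHull R (v '' t)) :
    ∃ l : ι → R, (∀ i, 0 ≤ l i) ∧ (∀ i ∉ t, l i = 0) ∧ ∑ i, l i = 1 ∧ ∑ i, l i • v i = x := by
  classical
  suffices convexHull R (v '' t) ⊆ {x | ∃ l : ι → R, (∀ i, 0 ≤ l i) ∧ (∀ i ∉ t, l i = 0) ∧
      ∑ i, l i = 1 ∧ ∑ i, l i • v i = x} from this hx
  refine convexHull_min ?_ ?_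
  · rintro _ ⟨i, hi, rfl⟩
    refine ⟨Pi.single i 1, Pi.single_nonneg.2 zero_le_one, fun j hj => ?_, by simp,
      by simp [Pi.single_apply]⟩
    exact Pi.single_eq_of_ne (by rintro rfl; exact hj hi) _
  · rintro _ ⟨l, hl0, hlt, hl1, rfl⟩ _ ⟨m, hm0, hmt, hm1, rfl⟩ a b ha hb hab
    refine ⟨a • l + b • m, fun i => ?_, fun i hi => ?_, ?_, ?_⟩
    · simp only [Pi.add_apply, Pi.smul_apply, smul_eq_mul]
      have := hl0 i; have := hm0 i; positivity
    · simp [hlt i hi, hmt i hi]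
    · simp [sum_add_distrib, ← mul_sum, hl1, hm1, hab]
    · simp [add_smul, mul_smul, sum_add_distrib, smul_sum]

section InnerProductSpace

variable {H : Type*} [NormedAddCommGroup H] [InnerProductSpace ℝ H]

theorem exists_forall_inner_sub_pos_of_notMem {K : Set H} (hK : Convex ℝ K) (hKc : IsComplete K)
    {c : H} (hc : c ∉ K) : ∃ d : H, ∀ y ∈ K, 0 < ⟪c - y, d⟫_ℝ := by
  rcases K.eq_empty_or_nonempty with rfl | hne
  · exact ⟨0, by simp⟩
  obtain ⟨q, hqK, hq⟩ := exists_norm_eq_iInf_of_complete_convex hne hKc hK c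
  have hobtuse := (norm_eq_iInf_iff_real_inner_le_zero hK hqK).mp hq
  have hcq : c - q ≠ 0 := sub_ne_zero.mpr fun h => hc (h ▸ hqK)
  refine ⟨c - q, fun y hy => ?_⟩
  have hsplit : ⟪c - y, c - q⟫_ℝ = ‖c - q‖ ^ 2 - ⟪c - q, y - q⟫_ℝ := by
    rw [← real_inner_self_eq_norm_sq, real_inner_comm, ← inner_sub_right]
    congr 1
    abel
  have hdist : 0 < ‖c - q‖ := norm_pos_iff.mpr hcq
  rw [hsplit]
  nlinarith [hobtuse y hy]

theorem eventually_norm_sub_smul_sq_lt {u d : H} (h : 0 < ⟪u, d⟫_ℝ) :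
    ∀ᶠ t in 𝓝[>] (0 : ℝ), ‖u - t • d‖ ^ 2 < ‖u‖ ^ 2 := by
  have hsmall : ∀ᶠ t in 𝓝[>] (0 : ℝ), t * ‖d‖ ^ 2 < 2 * ⟪u, d⟫_ℝ :=
    nhdsWithin_le_nhds <| (continuous_id.mul continuous_const).continuousAt.eventually_lt
      continuousAt_const (by simpa using h)
  filter_upwards [self_mem_nhdsWithin, hsmall] with t (ht : 0 < t) hts
  rw [norm_sub_sq_real, real_inner_smul_right, norm_smul, Real.norm_eq_abs, abs_of_pos ht]
  nlinarith

variable {ι : Type*} [Fintype ι]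

theorem sum_sum_mul_power_sub_eq {l : ι → ℝ} {p : ι → H} {c : H} (w : ι → ℝ)
    (hl : ∑ i, l i = 1) (hc : ∑ i, l i • p i = c) :
    ∑ i, ∑ j, l i * l j * (‖p i - p j‖ ^ 2 - w i - w j) =
      2 * ∑ i, l i * (‖c - p i‖ ^ 2 - w i) := by
  set a : ι → ℝ := fun i => ‖c - p i‖ ^ 2 - w i
  have hbar : ∑ i, l i • (c - p i) = 0 := by
    simp [smul_sub, sum_sub_distrib, ← sum_smul, hl, hc]
  have hcross : ∑ i, ∑ j, l i * l j * ⟪c - p i, c - p j⟫_ℝ = 0 := by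
    have := congrArg (fun v => ⟪v, v⟫_ℝ) hbar
    simp only [sum_inner, inner_sum, real_inner_smul_left, real_inner_smul_right,
      inner_zero_left] at this
    rw [← this]
    exact sum_congr rfl fun i _ => sum_congr rfl fun j _ => by rw [real_inner_comm]; ring
  calc ∑ i, ∑ j, l i * l j * (‖p i - p j‖ ^ 2 - w i - w j)
      = ∑ i, ∑ j, (l i * a i * l j + l i * (l j * a j) - 2 * (l i * l j * ⟪c - p i, c - p j⟫_ℝ)) :=
        sum_congr rfl fun i _ => sum_congr rfl fun j _ => by
          rw [show p i - p j = (c - p j) - (c - p i) by abel, norm_sub_sq_real, real_inner_comm]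
          ring
    _ = 2 * ∑ i, l i * a i := by
        simp only [sum_add_distrib, sum_sub_distrib, ← mul_sum, ← sum_mul, hl, hcross]
        ring

variable [Nonempty ι]

theorem mem_convexHull_active_of_forall_sup'_le {p : ι → H} {w : ι → ℝ} {c : H}
    (hc : ∀ x : H, univ.sup' univ_nonempty (fun i => ‖c - p i‖ ^ 2 - w i) ≤
      univ.sup' univ_nonempty (fun i => ‖x - p i‖ ^ 2 - w i)) :
    c ∈ convexHull ℝ (p '' {i | ‖c - p i‖ ^ 2 - w i =
      univ.sup' univ_nonempty (fun j => ‖c - p j‖ ^ 2 - w j)}) := by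
  set r := univ.sup' univ_nonempty (fun j => ‖c - p j‖ ^ 2 - w j)
  set I := {i | ‖c - p i‖ ^ 2 - w i = r}
  by_contra hnot
  obtain ⟨d, hd⟩ := exists_forall_inner_sub_pos_of_notMem (convex_convexHull ℝ _)
    (((Set.toFinite I).image p).isCompact_convexHull (𝕜 := ℝ)).isComplete hnot
  have hdescent : ∀ᶠ t in 𝓝[>] (0 : ℝ), ∀ i, ‖c - t • d - p i‖ ^ 2 - w i < r := by
    refine eventually_all.2 fun i => ?_
    by_cases hi : i ∈ I
    · filter_upwards [eventually_norm_sub_smul_sq_lt (hd _ (subset_convexHull ℝ _ ⟨i, hi, rfl⟩))]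
        with t ht
      rw [sub_right_comm]
      linarith [show ‖c - p i‖ ^ 2 - w i = r from hi]
    · have hlt : ‖c - p i‖ ^ 2 - w i < r :=
        lt_of_le_of_ne (le_sup' (fun j => ‖c - p j‖ ^ 2 - w j) (mem_univ i)) hi
      have hcont : Continuous fun t : ℝ => ‖c - t • d - p i‖ ^ 2 - w i := by fun_prop
      exact nhdsWithin_le_nhds <| hcont.continuousAt.eventually_lt continuousAt_const
        (by simpa using hlt)
  obtain ⟨t, ht⟩ := hdescent.exists
  exact (hc (c - t • d)).not_gt ((sup'_lt_iff _).2 fun i _ => ht i)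

end InnerProductSpace

theorem stmt5_general {H : Type*} [NormedAddCommGroup H] [InnerProductSpace ℝ H]
    {ι : Type*} [Fintype ι] [Nonempty ι] (p : ι → H) (w : ι → ℝ) (c : H)
    (hc : ∀ x : H,
      Finset.univ.sup' Finset.univ_nonempty (fun i => ‖c - p i‖ ^ 2 - w i) ≤
        Finset.univ.sup' Finset.univ_nonempty (fun i => ‖x - p i‖ ^ 2 - w i)) :
    ∃ l : ι → ℝ, (∀ i, 0 ≤ l i) ∧
      (∀ i, (‖c - p i‖ ^ 2 - w i ≠
        Finset.univ.sup' Finset.univ_nonempty (fun j => ‖c - p j‖ ^ 2 - w j)) → l i = 0) ∧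
      (∑ i, l i = 1) ∧ (c = ∑ i, l i • p i) ∧
      Finset.univ.sup' Finset.univ_nonempty (fun j => ‖c - p j‖ ^ 2 - w j) =
        (1 / 2) * ∑ i, ∑ j, l i * l j * (‖p i - p j‖ ^ 2 - w i - w j) := by
  set r := univ.sup' univ_nonempty (fun j => ‖c - p j‖ ^ 2 - w j)
  obtain ⟨l, hl0, hlI, hl1, hlc⟩ :=
    exists_weights_of_mem_convexHull_image (mem_convexHull_active_of_forall_sup'_le hc)
  refine ⟨l, hl0, hlI, hl1, hlc.symm, ?_⟩
  have hactive : ∑ i, l i * (‖c - p i‖ ^ 2 - w i) = ∑ i, l i * r := sum_congr rfl fun i _ => by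
    by_cases hi : ‖c - p i‖ ^ 2 - w i = r
    · rw [hi]
    · simp [hlI i hi]
  rw [sum_sum_mul_power_sub_eq w hl1 hlc, hactive, ← sum_mul, hl1]
  ring

theorem stmt5 {H : Type*} [NormedAddCommGroup H] [InnerProductSpace ℝ H] [CompleteSpace H]
    {ι : Type*} [Fintype ι] [Nonempty ι] (p : ι → H) (w : ι → ℝ) (c : H)
    (hc : ∀ x : H,
      Finset.univ.sup' Finset.univ_nonempty (fun i => ‖c - p i‖ ^ 2 - w i) ≤
        Finset.univ.sup' Finset.univ_nonempty (fun i => ‖x - p i‖ ^ 2 - w i)) :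
    ∃ l : ι → ℝ, (∀ i, 0 ≤ l i) ∧
      (∀ i, (‖c - p i‖ ^ 2 - w i ≠
        Finset.univ.sup' Finset.univ_nonempty (fun j => ‖c - p j‖ ^ 2 - w j)) → l i = 0) ∧
      (∑ i, l i = 1) ∧ (c = ∑ i, l i • p i) ∧
      Finset.univ.sup' Finset.univ_nonempty (fun j => ‖c - p j‖ ^ 2 - w j) =
        (1 / 2) * ∑ i, ∑ j, l i * l j * (‖p i - p j‖ ^ 2 - w i - w j) :=
  stmt5_general p w c hc
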